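/- arXiv:2401.04378 — 2 statements merged into one kernel-verified Lean document; each statement's English description precedes it below -/
import Mathlib

section
/- Let r > 0, α > 0, c > 0, λ > 0, μ > 0, μ_A > 0, and φ₀ ≠ 0 be real numbers. Let f₁t, a₁t : (0,∞) → ℝ be continuous with f₁t bounded, and set L(s) = c − λ μ f₁t(s) (extended continuously to [0,∞)) and M(s) = (λ μ_A / φ₀) a₁t(s) − λ μ f₁t(s). Let z : (0,∞) → ℝ be differentiable, bounded, and satisfy −r z′(s) + (L(s) − α/s) z(s) = M(s) − α/s for all s > 0, with z(s) s^{α/r} exp(−(1/r) ∫₀^s L(t) dt) → 0 as s → ∞. Assume the functions t ↦ a₁t(t) t^{α/r} exp(−(1/r) ∫₀^t L(v) dv) and t ↦ (λ μ f₁t(t) t + α) t^{α/r − 1} exp(−(1/r) ∫₀^t L(v) dv) are integrable on (0,∞), with I₂ = ∫₀^∞ (λ μ f₁t(t) t + α) t^{α/r − 1} exp(−(1/r) ∫₀^t L(v) dv) dt ≠ 0. Then φ₀ = λ μ_A I₁ / I₂, where I₁ = ∫₀^∞ a₁t(t) t^{α/r} exp(−(1/r) ∫₀^t (c − λ μ f₁t(v))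 dv) dt. -/
open MeasureTheory Set Real Filter
open scoped Topology

/-!
With `p = α / r` and `E s = exp (-(1/r) ∫₀ˢ L)`, the differential equation says exactly that
`g s = z s * s ^ p * E s` has derivative
`(1/r) (λ μ f₁(s) s + α) s^(p-1) E s - (λ μ_A / (r φ₀)) a₁(s) s^p E s` on `(0, ∞)`.
Since `z` is bounded and `p > 0`, `g` tends to `0` at `0⁺`, and by assumption also at `∞`; hence the
integral of `g'` over `(0, ∞)` vanishes, which is the linear relation `φ₀ I₂ = λ μ_A I₁`.
-/

section IntegratingFactor

variable {L z : ℝ → ℝ} {a s p k zd : ℝ}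

theorem hasDerivAt_primitive_of_continuousOn_Ici (hL : ContinuousOn L (Ici a)) (hs : a < s) :
    HasDerivAt (fun x => ∫ v in a..x, L v) (L s) s :=
  intervalIntegral.integral_hasDerivAt_right
    ((hL.mono Icc_subset_Ici_self).intervalIntegrable_of_Icc hs.le)
    ((hL.mono Ioi_subset_Ici_self).stronglyMeasurableAtFilter isOpen_Ioi s hs)
    (hL.continuousAt (Ici_mem_nhds hs))

theorem tendsto_primitive_nhdsGT (hL : ContinuousOn L (Ici a)) :
    Tendsto (fun x => ∫ v in a..x, L v) (𝓝[>] a) (𝓝 0) := by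
  have hcont : ContinuousWithinAt (fun x => ∫ v in a..x, L v) (Icc a (a + 1)) a := by
    have := intervalIntegral.continuousOn_primitive_interval (μ := volume) (a := a) (b := a + 1)
      ((hL.mono (by simp [uIcc_of_le, Icc_subset_Ici_self])).integrableOn_compact isCompact_uIcc)
    rw [uIcc_of_le (by linarith)] at this
    exact this a (left_mem_Icc.2 (by linarith))
  simpa using (hcont.mono_of_mem_nhdsWithin (Icc_mem_nhdsGT (by linarith))).tendsto

theorem hasDerivAt_mul_rpow_mul_exp_integral (hz : HasDerivAt z zd s)
    (hL : ContinuousOn L (Ici 0)) (hs : 0 < s) :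
    HasDerivAt (fun x => z x * x ^ p * exp (k * ∫ v in (0:ℝ)..x, L v))
      ((zd + (p / s + k * L s) * z s) * s ^ p * exp (k * ∫ v in (0:ℝ)..s, L v)) s := by
  refine ((hz.mul (hasDerivAt_rpow_const (p := p) (Or.inl hs.ne'))).mul
    ((hasDerivAt_primitive_of_continuousOn_Ici hL hs).const_mul k).exp).congr_deriv ?_
  rw [Pi.mul_apply, rpow_sub_one hs.ne']
  field_simp
  ring

theorem tendsto_mul_rpow_mul_exp_integral_nhdsGT_zero (hz : ∃ C, ∀ s ∈ Ioi (0:ℝ), |z s| ≤ C)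
    (hL : ContinuousOn L (Ici 0)) (hp : 0 < p) :
    Tendsto (fun x => z x * x ^ p * exp (k * ∫ v in (0:ℝ)..x, L v)) (𝓝[>] 0) (𝓝 0) := by
  obtain ⟨C, hC⟩ := hz
  have hzbdd : IsBoundedUnder (· ≤ ·) (𝓝[>] 0) (norm ∘ z) :=
    isBoundedUnder_of_eventually_le (eventually_nhdsWithin_of_forall hC)
  have hpow : Tendsto (fun x : ℝ => x ^ p) (𝓝[>] 0) (𝓝 0) := by
    simpa [zero_rpow hp.ne'] using
      ((continuousAt_rpow_const 0 p (Or.inr hp.le)).tendsto).mono_left nhdsWithin_le_nhds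
  have hexp : Tendsto (fun x => exp (k * ∫ v in (0:ℝ)..x, L v)) (𝓝[>] 0) (𝓝 1) := by
    simpa using ((tendsto_primitive_nhdsGT hL).const_mul k).rexp
  simpa only [mul_assoc] using
    isBoundedUnder_le_mul_tendsto_zero hzbdd (by simpa using hpow.mul hexp)

end IntegratingFactor

theorem gerber_shiu_initial_value_formula_general
    (r alpha c lam mu muA phi0 : ℝ)
    (hr : 0 < r) (halpha : 0 < alpha) (hphi0 : phi0 ≠ 0)
    (f₁t a₁t L M z zd : ℝ → ℝ)
    (hLcont : ContinuousOn L (Ici 0))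
    (hLdef : ∀ s ∈ Ioi (0:ℝ), L s = c - lam * mu * f₁t s)
    (hMdef : ∀ s ∈ Ioi (0:ℝ), M s = (lam * muA / phi0) * a₁t s - lam * mu * f₁t s)
    (hz : ∀ s ∈ Ioi (0:ℝ), HasDerivAt z (zd s) s)
    (hzbdd : ∃ C, ∀ s ∈ Ioi (0:ℝ), |z s| ≤ C)
    (hode : ∀ s ∈ Ioi (0:ℝ),
      -r * zd s + (L s - alpha / s) * z s = M s - alpha / s)
    (hElim : Tendsto
      (fun s => z s * s ^ (alpha / r)
        * Real.exp (-(1 / r) * ∫ t in (0:ℝ)..s, L t)) atTop (nhds 0))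
    (hI₁int : IntegrableOn
      (fun t => a₁t t * t ^ (alpha / r)
        * Real.exp (-(1 / r) * ∫ v in (0:ℝ)..t, L v)) (Ioi 0))
    (hI₂int : IntegrableOn
      (fun t => (lam * mu * f₁t t * t + alpha) * t ^ (alpha / r - 1)
        * Real.exp (-(1 / r) * ∫ v in (0:ℝ)..t, L v)) (Ioi 0))
    (hI₂ne : (∫ t in Ioi (0:ℝ),
        (lam * mu * f₁t t * t + alpha) * t ^ (alpha / r - 1)
          * Real.exp (-(1 / r) * ∫ v in (0:ℝ)..t, L v)) ≠ 0) :
    phi0 = lam * muA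
        * (∫ t in Ioi (0:ℝ),
            a₁t t * t ^ (alpha / r)
              * Real.exp (-(1 / r) * ∫ v in (0:ℝ)..t, c - lam * mu * f₁t v))
        / ∫ t in Ioi (0:ℝ),
            (lam * mu * f₁t t * t + alpha) * t ^ (alpha / r - 1)
              * Real.exp (-(1 / r) * ∫ v in (0:ℝ)..t, L v) := by
  have hp : 0 < alpha / r := div_pos halpha hr
  have hderiv : ∀ s ∈ Ioi (0:ℝ), HasDerivAt
      (fun x => z x * x ^ (alpha / r) * exp (-(1 / r) * ∫ v in (0:ℝ)..x, L v))
      ((1 / r) * ((lam * mu * f₁t s * s + alpha) * s ^ (alpha / r - 1)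
          * exp (-(1 / r) * ∫ v in (0:ℝ)..s, L v))
        - lam * muA / (r * phi0)
          * (a₁t s * s ^ (alpha / r) * exp (-(1 / r) * ∫ v in (0:ℝ)..s, L v))) s := by
    intro s hs
    have hs0 : s ≠ 0 := ne_of_gt hs
    have hzd : zd s + (alpha / r / s + -(1 / r) * L s) * z s
        = (1 / r) * ((lam * mu * f₁t s * s + alpha) / s) - lam * muA / (r * phi0) * a₁t s := by
      have hode_s := hode s hs
      rw [hMdef s hs] at hode_s
      field_simp at hode_s ⊢
      linear_combination -hode_s
    refine (hasDerivAt_mul_rpow_mul_exp_integral (hz s hs) hLcont hs).congr_deriv ?_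
    rw [hzd, rpow_sub_one hs0]
    ring
  have hzero : ContinuousWithinAt
      (fun x => z x * x ^ (alpha / r) * exp (-(1 / r) * ∫ v in (0:ℝ)..x, L v)) (Ici 0) 0 := by
    refine continuousWithinAt_Ioi_iff_Ici.mp ?_
    simpa only [ContinuousWithinAt, zero_rpow hp.ne', mul_zero, zero_mul] using
      tendsto_mul_rpow_mul_exp_integral_nhdsGT_zero (k := -(1 / r)) hzbdd hLcont hp
  have hFTC := integral_Ioi_of_hasDerivAt_of_tendsto hzero hderiv
    ((hI₂int.const_mul _).sub (hI₁int.const_mul _)) hElim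
  rw [integral_sub (hI₂int.const_mul _) (hI₁int.const_mul _), integral_const_mul,
    integral_const_mul, zero_rpow hp.ne', mul_zero, zero_mul, sub_zero] at hFTC
  have hL_eq : ∀ t ∈ Ioi (0:ℝ),
      (∫ v in (0:ℝ)..t, c - lam * mu * f₁t v) = ∫ v in (0:ℝ)..t, L v := fun t ht =>
    intervalIntegral.integral_congr_ae (Eventually.of_forall fun v hv =>
      (hLdef v (by rw [uIoc_of_le (le_of_lt ht)] at hv; exact hv.1)).symm)
  have hsolve : ∀ I₁ I₂ : ℝ, I₂ ≠ 0 → 1 / r * I₂ - lam * muA / (r * phi0) * I₁ = 0 →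
      phi0 = lam * muA * I₁ / I₂ := fun I₁ I₂ hI₂ h => by
    field_simp at h ⊢
    linear_combination h
  rw [setIntegral_congr_fun measurableSet_Ioi fun t ht => by rw [hL_eq t ht]]
  exact hsolve _ _ hI₂ne hFTC

/-- Closed-form expression for the initial value `φ₀ = Φ_∞(0)` of the
Gerber–Shiu function without a dividend barrier: letting `s → 0` in the
integrated representation of the Laplace-transformed equation yields
`φ₀ = λ μ_A I₁ / I₂`. -/
theorem gerber_shiu_initial_value_formula
    (r alpha c lam mu muA phi0 : ℝ)
    (hr : 0 < r) (halpha : 0 < alpha) (hc : 0 < c) (hlam : 0 < lam)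
    (hmu : 0 < mu) (hmuA : 0 < muA) (hphi0 : phi0 ≠ 0)
    (f₁t a₁t L M z zd : ℝ → ℝ)
    (hf₁tcont : ContinuousOn f₁t (Ioi 0))
    (ha₁tcont : ContinuousOn a₁t (Ioi 0))
    (hf₁tbdd : ∃ C, ∀ s ∈ Ioi (0:ℝ), |f₁t s| ≤ C)
    (hLcont : ContinuousOn L (Ici 0))
    (hLdef : ∀ s ∈ Ioi (0:ℝ), L s = c - lam * mu * f₁t s)
    (hMdef : ∀ s ∈ Ioi (0:ℝ), M s = (lam * muA / phi0) * a₁t s - lam * mu * f₁t s)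
    (hz : ∀ s ∈ Ioi (0:ℝ), HasDerivAt z (zd s) s)
    (hzbdd : ∃ C, ∀ s ∈ Ioi (0:ℝ), |z s| ≤ C)
    (hode : ∀ s ∈ Ioi (0:ℝ),
      -r * zd s + (L s - alpha / s) * z s = M s - alpha / s)
    (hElim : Tendsto
      (fun s => z s * s ^ (alpha / r)
        * Real.exp (-(1 / r) * ∫ t in (0:ℝ)..s, L t)) atTop (nhds 0))
    (hI₁int : IntegrableOn
      (fun t => a₁t t * t ^ (alpha / r)
        * Real.exp (-(1 / r) * ∫ v in (0:ℝ)..t, L v)) (Ioi 0))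
    (hI₂int : IntegrableOn
      (fun t => (lam * mu * f₁t t * t + alpha) * t ^ (alpha / r - 1)
        * Real.exp (-(1 / r) * ∫ v in (0:ℝ)..t, L v)) (Ioi 0))
    (hI₂ne : (∫ t in Ioi (0:ℝ),
        (lam * mu * f₁t t * t + alpha) * t ^ (alpha / r - 1)
          * Real.exp (-(1 / r) * ∫ v in (0:ℝ)..t, L v)) ≠ 0) :
    phi0 = lam * muA
        * (∫ t in Ioi (0:ℝ),
            a₁t t * t ^ (alpha / r)
              * Real.exp (-(1 / r) * ∫ v in (0:ℝ)..t, c - lam * mu * f₁t v))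
        / ∫ t in Ioi (0:ℝ),
            (lam * mu * f₁t t * t + alpha) * t ^ (alpha / r - 1)
              * Real.exp (-(1 / r) * ∫ v in (0:ℝ)..t, L v) :=
  gerber_shiu_initial_value_formula_general r alpha c lam mu muA phi0 hr halpha hphi0 f₁t a₁t L M z
    zd hLcont hLdef hMdef hz hzbdd hode hElim hI₁int hI₂int hI₂ne
end

section
/- Let c > 0, r ≥ 0, λ > 0, α ≥ 0, μ > 0, μ_A > 0, and φ₀ ≠ 0. Let f₁ : (0,∞) → [0,∞) be integrable with ∫₀^∞ f₁ = 1, F₁(u) = ∫₀^u f₁(y) dy, let A : [0,∞) → [0,∞) be integrable with ∫₀^∞ A(t) dt = μ_A, and A₁(u) = (1/μ_A) ∫₀^u A(t) dt. Suppose Z : [0,∞) → ℝ is continuously differentiable with Z(0) = 0 and Z, Z′ bounded, and satisfies for all u ≥ 0: (c + ru) Z(u) = (r + α) ∫₀^u Z(t) dt − α u + (λ μ_A / φ₀) A₁(u) − λ μ F₁(u) + λ μ ∫₀^u Z(u−y) f₁(y) dy. For s > 0 let z(s) = ∫₀^∞ e^{−su} Z′(u) du, f₁t(s) = ∫₀^∞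 e^{−su} f₁(u) du, and a₁t(s) = (1/μ_A) ∫₀^∞ e^{−su} A(u) du. Then z is differentiable on (0,∞) and for all s > 0: c z(s) − r z′(s) = (α/s) z(s) − α/s + (λ μ_A / φ₀) a₁t(s) − λ μ f₁t(s) + λ μ f₁t(s) z(s). -/
/-!
Transform both sides of the integrated equation for `Z`. Since `Z` is the primitive of `Z'`
with `Z 0 = 0`, its Laplace transform is `z(s)/s`; primitives divide transforms by `s`, `u ↦ u`
has transform `1/s²`, and the convolution `F₁ ⋆ Z` has transform `f̃₁ z / s`. The only term left
is the transform of `u Z(u)`, which is `-(d/ds)` of the transform of `Z`; writing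
`z(s) = s ⋅ laplace Z s` expresses it through `z` and `z'`, and multiplying the transformed
equation by `s` gives the ODE.
-/

open MeasureTheory Set Real Filter Topology

noncomputable def laplace (g : ℝ → ℝ) (s : ℝ) : ℝ :=
  ∫ u in Ioi (0:ℝ), exp (-s * u) * g u

def LaplaceConvergent (g : ℝ → ℝ) (s : ℝ) : Prop :=
  IntegrableOn (fun u => exp (-s * u) * g u) (Ioi 0)

def HasLaplace (g : ℝ → ℝ) (s v : ℝ) : Prop :=
  LaplaceConvergent g s ∧ laplace g s = v

section Laplace

variable {f g : ℝ → ℝ} {s a b : ℝ}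

theorem HasLaplace.congr (h : HasLaplace f s a) (hfg : EqOn f g (Ioi 0)) : HasLaplace g s a := by
  have hfg' : EqOn (fun u => exp (-s * u) * f u) (fun u => exp (-s * u) * g u) (Ioi 0) :=
    fun u hu => by simp only [hfg hu]
  exact ⟨h.1.congr_fun hfg' measurableSet_Ioi,
    (setIntegral_congr_fun measurableSet_Ioi hfg').symm.trans h.2⟩

theorem HasLaplace.add (hf : HasLaplace f s a) (hg : HasLaplace g s b) :
    HasLaplace (fun u => f u + g u) s (a + b) := by
  simp only [HasLaplace, LaplaceConvergent, laplace, mul_add] at *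
  exact ⟨hf.1.add hg.1, by rw [integral_add hf.1 hg.1, hf.2, hg.2]⟩

theorem HasLaplace.sub (hf : HasLaplace f s a) (hg : HasLaplace g s b) :
    HasLaplace (fun u => f u - g u) s (a - b) := by
  simp only [HasLaplace, LaplaceConvergent, laplace, mul_sub] at *
  exact ⟨hf.1.sub hg.1, by rw [integral_sub hf.1 hg.1, hf.2, hg.2]⟩

theorem HasLaplace.const_mul (hf : HasLaplace f s a) (c : ℝ) :
    HasLaplace (fun u => c * f u) s (c * a) := by
  simp only [HasLaplace, LaplaceConvergent, laplace, mul_left_comm _ c] at *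
  exact ⟨hf.1.const_mul c, by rw [integral_const_mul, hf.2]⟩

theorem LaplaceConvergent.hasLaplace (hg : LaplaceConvergent g s) :
    HasLaplace g s (laplace g s) :=
  ⟨hg, rfl⟩

theorem LaplaceConvergent.of_abs_le (hg : AEStronglyMeasurable g (volume.restrict (Ioi 0)))
    (hgf : ∀ u ∈ Ioi (0:ℝ), |g u| ≤ f u) (hf : LaplaceConvergent f s) :
    LaplaceConvergent g s := by
  refine hf.mono' (by fun_prop) ?_
  filter_upwards [ae_restrict_mem measurableSet_Ioi] with u hu
  rw [norm_mul, norm_of_nonneg (exp_pos _).le, Real.norm_eq_abs]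
  exact mul_le_mul_of_nonneg_left (hgf u hu) (exp_pos _).le

theorem laplaceConvergent_of_integrableOn (hs : 0 ≤ s) (hg : IntegrableOn g (Ioi 0)) :
    LaplaceConvergent g s := by
  refine hg.bdd_mul (c := 1) (by fun_prop) ?_
  filter_upwards [ae_restrict_mem measurableSet_Ioi] with u hu
  rw [norm_of_nonneg (exp_pos _).le, exp_le_one_iff]
  nlinarith [mem_Ioi.mp hu]

theorem hasLaplace_one (hs : 0 < s) : HasLaplace (fun _ => 1) s s⁻¹ := by
  refine ⟨?_, ?_⟩
  · simpa [LaplaceConvergent] using exp_neg_integrableOn_Ioi 0 hs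
  · simp only [laplace, mul_one]
    rw [integral_exp_mul_Ioi (neg_neg_iff_pos.mpr hs)]
    simp

theorem HasLaplace.convolution (hf : HasLaplace f s a) (hg : HasLaplace g s b) :
    HasLaplace (fun x => ∫ t in (0:ℝ)..x, f (x - t) * g t) s (a * b) := by
  have hconv : EqOn (fun x => ∫ t in (0:ℝ)..x,
        ContinuousLinearMap.mul ℝ ℝ (exp (-s * t) * g t) (exp (-s * (x - t)) * f (x - t)))
      (fun x => exp (-s * x) * ∫ t in (0:ℝ)..x, f (x - t) * g t) (Ioi 0) := fun x _ => by
    simp only [ContinuousLinearMap.mul_apply', ← intervalIntegral.integral_const_mul]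
    refine intervalIntegral.integral_congr fun t _ => ?_
    rw [show -s * x = -s * t + -s * (x - t) by ring, exp_add]
    ring
  refine ⟨?_, ?_⟩
  · have h := integrable_posConvolution hg.1 hf.1 (ContinuousLinearMap.mul ℝ ℝ)
    rw [posConvolution, integrable_indicator_iff measurableSet_Ioi] at h
    exact h.congr_fun hconv measurableSet_Ioi
  · rw [laplace, ← setIntegral_congr_fun measurableSet_Ioi hconv,
      integral_posConvolution hg.1 hf.1, ContinuousLinearMap.mul_apply', mul_comm]
    exact congrArg₂ _ hf.2 hg.2

theorem HasLaplace.intervalIntegral (hf : HasLaplace f s a) (hs : 0 < s) :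
    HasLaplace (fun x => ∫ t in (0:ℝ)..x, f t) s (a / s) := by
  have h := (hasLaplace_one hs).convolution hf
  simp only [one_mul] at h
  rwa [div_eq_inv_mul]

theorem hasLaplace_id (hs : 0 < s) : HasLaplace (fun u => u) s (s ^ 2)⁻¹ := by
  simpa [sq, div_eq_mul_inv, mul_inv] using (hasLaplace_one hs).intervalIntegral hs

theorem hasLaplace_of_hasDerivAt (hs : 0 < s) (hderiv : ∀ u ∈ Ici (0:ℝ), HasDerivAt f (g u) u)
    (hcont : ContinuousOn g (Ici 0)) (hg : HasLaplace g s a) :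
    HasLaplace f s ((f 0 + a) / s) := by
  have hftc : EqOn (fun x => f 0 * 1 + ∫ t in (0:ℝ)..x, g t) f (Ioi 0) := fun x hx => by
    have hsub : uIcc 0 x ⊆ Ici 0 := by
      rw [uIcc_of_le (le_of_lt hx)]
      exact Icc_subset_Ici_self
    dsimp only
    rw [intervalIntegral.integral_eq_sub_of_hasDerivAt (fun t ht => hderiv t (hsub ht))
      (hcont.mono hsub).intervalIntegrable]
    ring
  have h := (((hasLaplace_one hs).const_mul (f 0)).add (hg.intervalIntegral hs)).congr hftc
  rwa [add_div, div_eq_mul_inv]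

theorem laplaceConvergent_of_abs_le_const {C : ℝ} (hs : 0 < s)
    (hg : AEStronglyMeasurable g (volume.restrict (Ioi 0))) (hgC : ∀ u ∈ Ioi (0:ℝ), |g u| ≤ C) :
    LaplaceConvergent g s :=
  .of_abs_le hg (fun u hu => by simpa using hgC u hu) ((hasLaplace_one hs).const_mul C).1

theorem laplaceConvergent_id_mul_of_abs_le_const {C : ℝ} (hs : 0 < s)
    (hg : AEStronglyMeasurable g (volume.restrict (Ioi 0))) (hgC : ∀ u ∈ Ioi (0:ℝ), |g u| ≤ C) :
    LaplaceConvergent (fun u => u * g u) s := by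
  refine .of_abs_le (by fun_prop) (fun u hu => ?_) ((hasLaplace_id hs).const_mul C).1
  rw [abs_mul, abs_of_pos (mem_Ioi.mp hu), mul_comm C]
  exact mul_le_mul_of_nonneg_left (hgC u hu) (le_of_lt hu)

theorem hasDerivAt_laplace {C : ℝ} (hs : 0 < s)
    (hg : AEStronglyMeasurable g (volume.restrict (Ioi 0))) (hgC : ∀ u ∈ Ioi (0:ℝ), |g u| ≤ C) :
    HasDerivAt (laplace g) (-laplace (fun u => u * g u) s) s := by
  have hbound : ∀ᵐ u ∂(volume.restrict (Ioi 0)), ∀ x ∈ Ioi (s / 2),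
      ‖-(exp (-x * u) * (u * g u))‖ ≤ exp (-(s / 2) * u) * (C * u) := by
    filter_upwards [ae_restrict_mem measurableSet_Ioi] with u (hu : 0 < u) x (hx : s / 2 < x)
    rw [norm_neg, norm_mul, norm_mul, norm_of_nonneg (exp_pos _).le, norm_of_nonneg hu.le,
      Real.norm_eq_abs]
    exact mul_le_mul (exp_le_exp.mpr (by nlinarith)) (by nlinarith [hgC u hu, abs_nonneg (g u)])
      (by positivity) (exp_pos _).le
  have hdiff : ∀ᵐ u ∂(volume.restrict (Ioi 0)), ∀ x ∈ Ioi (s / 2),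
      HasDerivAt (fun x => exp (-x * u) * g u) (-(exp (-x * u) * (u * g u))) x :=
    .of_forall fun u x _ =>
      ((((hasDerivAt_neg x).mul_const u).exp).mul_const (g u)).congr_deriv (by ring)
  have h := hasDerivAt_integral_of_dominated_loc_of_deriv_le (F := fun x u => exp (-x * u) * g u)
    (Ioi_mem_nhds (half_lt_self hs))
    (.of_forall fun x => by fun_prop) (laplaceConvergent_of_abs_le_const hs hg hgC) (by fun_prop)
    hbound ((hasLaplace_id (half_pos hs)).const_mul C).1 hdiff
  rw [integral_neg] at h
  exact h.2

theorem hasDerivAt_of_forall_hasLaplace_div {z : ℝ → ℝ} {C : ℝ} (hs : 0 < s)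
    (hg : AEStronglyMeasurable g (volume.restrict (Ioi 0))) (hgC : ∀ u ∈ Ioi (0:ℝ), |g u| ≤ C)
    (hgz : ∀ σ ∈ Ioi (0:ℝ), HasLaplace g σ (z σ / σ)) :
    HasDerivAt z (z s / s - s * laplace (fun u => u * g u) s) s := by
  have hz_eq : (fun σ => σ * laplace g σ) =ᶠ[𝓝 s] z :=
    eventually_of_mem (Ioi_mem_nhds hs) fun σ hσ => by
      simp only [(hgz σ hσ).2]
      field_simp [(mem_Ioi.mp hσ).ne']
  refine (((hasDerivAt_id s).mul (hasDerivAt_laplace hs hg hgC)).congr_of_eventuallyEq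
    hz_eq.symm).congr_deriv ?_
  rw [(hgz s hs).2, id, one_mul]
  ring

end Laplace

theorem laplace_transform_ode_for_z_general
    (c r lam alpha mu muA phi0 : ℝ)
    (f₁ F₁ A A₁ Z Zd z f₁t a₁t : ℝ → ℝ)
    (hf₁ : IntegrableOn f₁ (Ioi 0))
    (hF₁ : ∀ u, F₁ u = ∫ y in (0:ℝ)..u, f₁ y)
    (hA : IntegrableOn A (Ioi 0))
    (hA₁ : ∀ u, A₁ u = (1 / muA) * ∫ t in (0:ℝ)..u, A t)
    (hZdiff : ∀ u ∈ Ici (0:ℝ), HasDerivAt Z (Zd u) u)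
    (hZdcont : ContinuousOn Zd (Ici 0))
    (hZ0 : Z 0 = 0)
    (hZbdd : ∃ C, ∀ u ∈ Ici (0:ℝ), |Z u| ≤ C)
    (hZdbdd : ∃ C, ∀ u ∈ Ici (0:ℝ), |Zd u| ≤ C)
    (hZeq : ∀ u ∈ Ici (0:ℝ),
      (c + r * u) * Z u
        = (r + alpha) * (∫ t in (0:ℝ)..u, Z t) - alpha * u
          + (lam * muA / phi0) * A₁ u - lam * mu * F₁ u
          + lam * mu * ∫ y in (0:ℝ)..u, Z (u - y) * f₁ y)
    (hz : ∀ s ∈ Ioi (0:ℝ), z s = ∫ u in Ioi (0:ℝ), Real.exp (-s * u) * Zd u)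
    (hf₁t : ∀ s ∈ Ioi (0:ℝ),
      f₁t s = ∫ u in Ioi (0:ℝ), Real.exp (-s * u) * f₁ u)
    (ha₁t : ∀ s ∈ Ioi (0:ℝ),
      a₁t s = (1 / muA) * ∫ u in Ioi (0:ℝ), Real.exp (-s * u) * A u) :
    (∀ s ∈ Ioi (0:ℝ), DifferentiableAt ℝ z s) ∧
    ∀ s ∈ Ioi (0:ℝ),
      c * z s - r * deriv z s
        = (alpha / s) * z s - alpha / s + (lam * muA / phi0) * a₁t s
          - lam * mu * f₁t s + lam * mu * f₁t s * z s := by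
  obtain ⟨CZ, hCZ⟩ := hZbdd
  obtain ⟨CD, hCD⟩ := hZdbdd
  have hZm : AEStronglyMeasurable Z (volume.restrict (Ioi 0)) :=
    ((HasDerivAt.continuousOn hZdiff).mono Ioi_subset_Ici_self).aestronglyMeasurable
      measurableSet_Ioi
  have hZdm : AEStronglyMeasurable Zd (volume.restrict (Ioi 0)) :=
    (hZdcont.mono Ioi_subset_Ici_self).aestronglyMeasurable measurableSet_Ioi
  have hLZ : ∀ s ∈ Ioi (0:ℝ), HasLaplace Z s (z s / s) := fun s hs => by
    simpa only [hZ0, zero_add] using hasLaplace_of_hasDerivAt hs hZdiff hZdcont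
      ⟨laplaceConvergent_of_abs_le_const hs hZdm fun u hu => hCD u (Ioi_subset_Ici_self hu),
        (hz s hs).symm⟩
  have hderiv : ∀ s ∈ Ioi (0:ℝ),
      HasDerivAt z (z s / s - s * laplace (fun u => u * Z u) s) s := fun s hs =>
    hasDerivAt_of_forall_hasLaplace_div hs hZm (fun u hu => hCZ u (Ioi_subset_Ici_self hu)) hLZ
  refine ⟨fun s hs => (hderiv s hs).differentiableAt, fun s hs => ?_⟩
  have hf₁L : HasLaplace f₁ s (f₁t s) :=
    ⟨laplaceConvergent_of_integrableOn (le_of_lt hs) hf₁, (hf₁t s hs).symm⟩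
  have hF₁L : HasLaplace F₁ s (f₁t s / s) :=
    (hf₁L.intervalIntegral hs).congr fun u _ => (hF₁ u).symm
  have hA₁L : HasLaplace A₁ s (a₁t s / s) := by
    rw [ha₁t s hs, mul_div_assoc]
    exact (((laplaceConvergent_of_integrableOn (le_of_lt hs) hA).hasLaplace.intervalIntegral
      hs).const_mul (1 / muA)).congr fun u _ => (hA₁ u).symm
  have huZ := (laplaceConvergent_id_mul_of_abs_le_const hs hZm
    fun u hu => hCZ u (Ioi_subset_Ici_self hu)).hasLaplace
  have hlhs := (((hLZ s hs).const_mul c).add (huZ.const_mul r)).congr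
    (g := fun u => (c + r * u) * Z u) fun u _ => by beta_reduce; ring
  have hrhs := ((((((hLZ s hs).intervalIntegral hs).const_mul (r + alpha)).sub
    ((hasLaplace_id hs).const_mul alpha)).add (hA₁L.const_mul (lam * muA / phi0))).sub
    (hF₁L.const_mul (lam * mu))).add (((hLZ s hs).convolution hf₁L).const_mul (lam * mu))
  have heq := hlhs.2.symm.trans
    (hrhs.congr fun u hu => (hZeq u (Ioi_subset_Ici_self hu)).symm).2
  rw [(hderiv s hs).deriv]
  have hs0 : s ≠ 0 := (mem_Ioi.mp hs).ne'
  field_simp at heq ⊢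
  linear_combination heq

/-- Taking Laplace transforms of the integrated equation for the auxiliary
function `Z` yields the first-order linear ODE
`c z(s) − r z′(s) = (α/s) z(s) − α/s + (λμ_A/φ₀) ã₁(s) − λμ f̃₁(s) + λμ f̃₁(s) z(s)`
for the Laplace–Stieltjes transform `z` of `Z`. -/
theorem laplace_transform_ode_for_z
    (c r lam alpha mu muA phi0 : ℝ)
    (hc : 0 < c) (hr : 0 ≤ r) (hlam : 0 < lam) (halpha : 0 ≤ alpha)
    (hmu : 0 < mu) (hmuA : 0 < muA) (hphi0 : phi0 ≠ 0)
    (f₁ F₁ A A₁ Z Zd z f₁t a₁t : ℝ → ℝ)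
    (hf₁ : IntegrableOn f₁ (Ioi 0))
    (hf₁nonneg : ∀ y ∈ Ioi (0:ℝ), 0 ≤ f₁ y)
    (hf₁prob : (∫ y in Ioi (0:ℝ), f₁ y) = 1)
    (hF₁ : ∀ u, F₁ u = ∫ y in (0:ℝ)..u, f₁ y)
    (hA : IntegrableOn A (Ioi 0))
    (hAnonneg : ∀ t ∈ Ioi (0:ℝ), 0 ≤ A t)
    (hAmass : (∫ t in Ioi (0:ℝ), A t) = muA)
    (hA₁ : ∀ u, A₁ u = (1 / muA) * ∫ t in (0:ℝ)..u, A t)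
    (hZdiff : ∀ u ∈ Ici (0:ℝ), HasDerivAt Z (Zd u) u)
    (hZdcont : ContinuousOn Zd (Ici 0))
    (hZ0 : Z 0 = 0)
    (hZbdd : ∃ C, ∀ u ∈ Ici (0:ℝ), |Z u| ≤ C)
    (hZdbdd : ∃ C, ∀ u ∈ Ici (0:ℝ), |Zd u| ≤ C)
    (hZeq : ∀ u ∈ Ici (0:ℝ),
      (c + r * u) * Z u
        = (r + alpha) * (∫ t in (0:ℝ)..u, Z t) - alpha * u
          + (lam * muA / phi0) * A₁ u - lam * mu * F₁ u
          + lam * mu * ∫ y in (0:ℝ)..u, Z (u - y) * f₁ y)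
    (hz : ∀ s ∈ Ioi (0:ℝ), z s = ∫ u in Ioi (0:ℝ), Real.exp (-s * u) * Zd u)
    (hf₁t : ∀ s ∈ Ioi (0:ℝ),
      f₁t s = ∫ u in Ioi (0:ℝ), Real.exp (-s * u) * f₁ u)
    (ha₁t : ∀ s ∈ Ioi (0:ℝ),
      a₁t s = (1 / muA) * ∫ u in Ioi (0:ℝ), Real.exp (-s * u) * A u) :
    (∀ s ∈ Ioi (0:ℝ), DifferentiableAt ℝ z s) ∧
    ∀ s ∈ Ioi (0:ℝ),
      c * z s - r * deriv z s
        = (alpha / s) * z s - alpha / s + (lam * muA / phi0) * a₁t s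
          - lam * mu * f₁t s + lam * mu * f₁t s * z s :=
  laplace_transform_ode_for_z_general c r lam alpha mu muA phi0 f₁ F₁ A A₁ Z Zd z f₁t a₁t hf₁ hF₁ hA
    hA₁ hZdiff hZdcont hZ0 hZbdd hZdbdd hZeq hz hf₁t ha₁t
end
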